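/- Define S-linear maps ∂ : F_d → F_{d-1} (d ≥ 1) by ∂[{i}|{j}] = x_i x_j and, for d ≥ 2, ∂[σ|τ] = x_{max τ}[σ|τ∖{max τ}] − (−1)^{|τ|+|σ|} x_{min σ}[σ∖{min σ}|τ], where any symbol not lying in B_{d-1} is interpreted as 0. Then for all basis elements [σ₁|τ₁] ∈ B_p and [σ₂|τ₂] ∈ B_q (p,q ≥ 1), c((d[σ₁|τ₁]) ⋆ [σ₂|τ₂]) = c((∂[σ₁|τ₁]) ⋆ [σ₂|τ₂]). -/

import Mathlib

open Classical MvPolynomial Finsupp TensorProduct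

set_option maxHeartbeats 1600000

noncomputable section

namespace EdgeRes

/-- A "cell" `(σ, τ)`: a pair of finite sets of vertices, representing the symbol `[σ|τ]`. -/
abbrev Cell (n : ℕ) := Finset (Fin n) × Finset (Fin n)

/-- The cointerval graph of the intervals `[a i, b i]`: distinct vertices are adjacent
iff the corresponding closed intervals are disjoint. -/
def cigraph (n : ℕ) (a b : Fin n → ℝ) : SimpleGraph (Fin n) where
  Adj i j := i ≠ j ∧ Disjoint (Set.Icc (a i) (b i)) (Set.Icc (a j) (b j))
  symm := by constructor; intro i j h; exact ⟨h.1.symm, h.2.symm⟩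
  loopless := by constructor; intro i h; exact h.1 rfl

variable {n : ℕ}

/-- The homological degree of a cell: `|σ| + |τ| - 1`. -/
def cellDeg (e : Cell n) : ℕ := e.1.card + e.2.card - 1

/-- `e = (σ, τ)` is a basis cell: either the degree-0 cell `(∅, ∅)` (representing `1 ∈ B₀`),
or `σ, τ` are disjoint and nonempty, `max σ < min τ`, and every `i ∈ σ` is adjacent
to `min τ` in `G`. -/
def IsBasisCell (G : SimpleGraph (Fin n)) (e : Cell n) : Prop :=
  e = (∅, ∅) ∨
  (e.1.Nonempty ∧ e.2.Nonempty ∧ Disjoint e.1 e.2 ∧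
   (∀ i ∈ e.1, ∀ j ∈ e.2, i < j) ∧
   (∀ i ∈ e.1, ∀ j ∈ e.2, (∀ j' ∈ e.2, j ≤ j') → G.Adj i j))

/-- `e ∈ B_d`. -/
def InB (G : SimpleGraph (Fin n)) (d : ℕ) (e : Cell n) : Prop :=
  IsBasisCell G e ∧ cellDeg e = d

/-- The underlying module of the resolution: the free `S`-module on all cells (the
resolution `F` is the submodule family spanned by the basis cells of each degree). -/
abbrev Ftot (n : ℕ) (k : Type) [Field k] := Cell n →₀ MvPolynomial (Fin n) k

variable (G : SimpleGraph (Fin n)) (k : Type) [Field k]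

/-- The basis vector corresponding to a cell, where symbols that are not genuine
basis elements are interpreted as `0`. -/
def sym (e : Cell n) : Ftot n k :=
  if IsBasisCell G e then Finsupp.single e 1 else 0

/-- The differential on a basis cell: `d[{i}|{j}] = x_i x_j`, and for `|σ|+|τ| ≥ 3`,
`d[σ|τ] = Σ_{i∈σ} (−1)^{|τ|+|{j∈σ : j>i}|} x_i [σ∖i|τ] + Σ_{i∈τ} (−1)^{|{j∈τ : j>i}|} x_i [σ|τ∖i]`. -/
def diffCell (e : Cell n) : Ftot n k :=
  if IsBasisCell G e then
    if e.1.card + e.2.card = 2 then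
      (∏ i ∈ e.1 ∪ e.2, (X i : MvPolynomial (Fin n) k)) • sym G k ((∅, ∅) : Cell n)
    else if 3 ≤ e.1.card + e.2.card then
      (∑ i ∈ e.1,
        (((-1 : MvPolynomial (Fin n) k) ^ (e.2.card + (e.1.filter fun j => i < j).card)) * X i) •
          sym G k (e.1.erase i, e.2))
      + (∑ i ∈ e.2,
        (((-1 : MvPolynomial (Fin n) k) ^ ((e.2.filter fun j => i < j).card)) * X i) •
          sym G k (e.1, e.2.erase i))
    else 0
  else 0

/-- The differential, as an `S`-linear endomorphism of the total module (it is zero in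
degree `0` and on non-basis cells). -/
def Dmap : Ftot n k →ₗ[MvPolynomial (Fin n) k] Ftot n k :=
  Finsupp.lsum ℕ fun e => LinearMap.smulRight LinearMap.id (diffCell G k e)

/-- The submodule `F_d`: the span of the basis cells in `B_d`.  (`F` is the direct sum of
these, and `F_0 = S·[∅|∅] ≅ S`.) -/
def Fsub (d : ℕ) : Submodule (MvPolynomial (Fin n) k) (Ftot n k) :=
  Submodule.span _ {f : Ftot n k | ∃ e : Cell n, InB G d e ∧ f = Finsupp.single e 1}

/-- The edge ideal `I_G`, generated by the `x_i x_j` for edges `ij` of `G`. -/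
def edgeIdeal : Ideal (MvPolynomial (Fin n) k) :=
  Ideal.span {m | ∃ i j : Fin n, G.Adj i j ∧ m = X i * X j}

/-- The irrelevant maximal ideal `(x_1, …, x_n)`. -/
def irrIdeal (n : ℕ) (k : Type) [Field k] : Ideal (MvPolynomial (Fin n) k) :=
  Ideal.span (Set.range fun i : Fin n => (X i : MvPolynomial (Fin n) k))

/-- The set of pairs `(i, j)` with `i < j`, `ij ∈ E(G)`, and `x_i x_j ∣ x^α`; i.e. the
elements `[{i}|{j}]` of `B₁` whose monomial divides `x^α`. -/
def DvdSet (α : Fin n →₀ ℕ) : Finset (Fin n × Fin n) :=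
  Finset.univ.filter fun p => p.1 < p.2 ∧ G.Adj p.1 p.2 ∧ 1 ≤ α p.1 ∧ 1 ≤ α p.2

/-- `c` on a monomial `x^α ∈ F_0 = S`: zero if `x^α ∉ I_G`; otherwise
`(x^α/(x_i x_j))·[{i}|{j}]` for the `≺`-minimal `[{i}|{j}] ∈ B₁` with `x_i x_j ∣ x^α`
(i.e. `j` is largest possible and then `i` smallest possible). -/
def cZero (α : Fin n →₀ ℕ) : Ftot n k :=
  if h : (DvdSet G α).Nonempty then
    let t := ((DvdSet G α).image Prod.snd).max' (h.image _)
    if h2 : ((((DvdSet G α).filter fun p => p.2 = t)).image Prod.fst).Nonempty then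
      let s := ((((DvdSet G α).filter fun p => p.2 = t)).image Prod.fst).min' h2
      (monomial (α - Finsupp.single s 1 - Finsupp.single t 1) (1 : k)) • sym G k ({s}, {t})
    else 0
  else 0

/-- `C₁ = {i ∈ supp α : i > max τ}`. -/
def C1set (τ : Finset (Fin n)) (α : Fin n →₀ ℕ) : Finset (Fin n) :=
  α.support.filter fun i => ∀ j ∈ τ, j < i

/-- `C₂ = {i ∈ supp α : i < min σ, {i, min τ} ∈ E(G)}`. -/
def C2set (σ τ : Finset (Fin n)) (α : Fin n →₀ ℕ) : Finset (Fin n) :=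
  α.support.filter fun i =>
    (∀ s ∈ σ, i < s) ∧ ∀ j ∈ τ, (∀ j' ∈ τ, j ≤ j') → G.Adj i j

/-- `C₃ = {i ∈ supp α : i < min σ, i < max supp α, {i, max supp α} ∈ E(G)}`. -/
def C3set (σ : Finset (Fin n)) (α : Fin n →₀ ℕ) : Finset (Fin n) :=
  α.support.filter fun i =>
    (∀ s ∈ σ, i < s) ∧ ∀ m ∈ α.support, (∀ m' ∈ α.support, m' ≤ m) → (i < m ∧ G.Adj i m)

/-- The value of the contracting homotopy `c` on the `k`-basis vector `x^α·e`. -/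
def cMono (e : Cell n) (α : Fin n →₀ ℕ) : Ftot n k :=
  if IsBasisCell G e then
    if hτ : e.2.Nonempty then
      if e.2.card = 1 then
        -- `τ = {t}`
        let t := e.2.max' hτ
        if h1 : (C1set e.2 α).Nonempty then
          let m1 := (C1set e.2 α).max' h1
          (monomial (α - Finsupp.single m1 1) (1 : k)) • sym G k (e.1, insert m1 e.2)
          + (if h3 : (C3set G e.1 α).Nonempty then
              let m3 := (C3set G e.1 α).min' h3
              ((-1 : MvPolynomial (Fin n) k) ^ (e.1.card + 1)) •
                ((monomial (α + Finsupp.single t 1 - Finsupp.single m1 1 - Finsupp.single m3 1)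
                    (1 : k)) • sym G k (insert m3 e.1, ({m1} : Finset (Fin n))))
            else 0)
        else
          if h2 : (C2set G e.1 e.2 α).Nonempty then
            let m2 := (C2set G e.1 e.2 α).min' h2
            ((-1 : MvPolynomial (Fin n) k) ^ (e.1.card + 1)) •
              ((monomial (α - Finsupp.single m2 1) (1 : k)) • sym G k (insert m2 e.1, e.2))
          else 0
      else
        -- `|τ| ≥ 2`
        if h1 : (C1set e.2 α).Nonempty then
          let m1 := (C1set e.2 α).max' h1
          (monomial (α - Finsupp.single m1 1) (1 : k)) • sym G k (e.1, insert m1 e.2)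
        else 0
    else cZero G k α  -- the degree-0 basis cell `(∅, ∅)`
  else 0

/-- The `k`-basis of the total module, indexed by pairs (cell, monomial exponent). -/
def FBasis (n : ℕ) (k : Type) [Field k] :
    Module.Basis ((_ : Cell n) × (Fin n →₀ ℕ)) k (Ftot n k) :=
  Finsupp.basis fun _ => MvPolynomial.basisMonomials (Fin n) k

/-- The contracting homotopy `c`, as a `k`-linear endomorphism of the total module. -/
def Cmap : Ftot n k →ₗ[k] Ftot n k :=
  (FBasis n k).constr ℕ fun p => cMono G k p.1 p.2

/-- The `S`-bilinear extension of a map defined on pairs of cells. -/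
def biext (b : Cell n → Cell n → Ftot n k) (f g : Ftot n k) : Ftot n k :=
  ∑ e₁ ∈ f.support, ∑ e₂ ∈ g.support, (f e₁ * g e₂) • b e₁ e₂

/-- The product of two basis cells, defined recursively (with fuel, which suffices as each
recursive step lowers the total degree): `1 ⋆ 1 = 1`, and for `p + q ≥ 1`,
`e₁ ⋆ e₂ = c((d e₁) ⋆ e₂) + (−1)^p c(e₁ ⋆ (d e₂))`. -/
def bstar : ℕ → Cell n → Cell n → Ftot n k
  | 0, _, _ => 0
  | N + 1, e₁, e₂ =>
    if cellDeg e₁ + cellDeg e₂ = 0 then Finsupp.single ((∅, ∅) : Cell n) 1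
    else
      Cmap G k (biext k (fun a b => bstar N a b) (Dmap G k (Finsupp.single e₁ 1)) (Finsupp.single e₂ 1))
      + ((-1 : MvPolynomial (Fin n) k) ^ cellDeg e₁) •
          Cmap G k (biext k (fun a b => bstar N a b) (Finsupp.single e₁ 1) (Dmap G k (Finsupp.single e₂ 1)))

/-- The product `⋆` on the resolution, extended `S`-bilinearly from basis cells. -/
def pstar (f g : Ftot n k) : Ftot n k := biext k (bstar G k (4 * n + 4)) f g

/-- The map `∂` on a basis cell: `∂[{i}|{j}] = x_i x_j`, and for `|σ|+|τ| ≥ 3`,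
`∂[σ|τ] = x_{max τ}[σ|τ∖max τ] − (−1)^{|τ|+|σ|} x_{min σ}[σ∖min σ|τ]`. -/
def partialCell (e : Cell n) : Ftot n k :=
  if IsBasisCell G e then
    if e.1.card + e.2.card = 2 then
      (∏ i ∈ e.1 ∪ e.2, (X i : MvPolynomial (Fin n) k)) • sym G k ((∅, ∅) : Cell n)
    else if 3 ≤ e.1.card + e.2.card then
      if h1 : e.1.Nonempty then
        if h2 : e.2.Nonempty then
          (X (e.2.max' h2) : MvPolynomial (Fin n) k) • sym G k (e.1, e.2.erase (e.2.max' h2))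
          - ((-1 : MvPolynomial (Fin n) k) ^ (e.2.card + e.1.card)) •
              ((X (e.1.min' h1) : MvPolynomial (Fin n) k) •
                sym G k (e.1.erase (e.1.min' h1), e.2))
        else 0
      else 0
    else 0
  else 0

/-- The map `∂`, as an `S`-linear endomorphism of the total module. -/
def Pmap : Ftot n k →ₗ[MvPolynomial (Fin n) k] Ftot n k :=
  Finsupp.lsum ℕ fun e => LinearMap.smulRight LinearMap.id (partialCell G k e)

/-- The `k`-linear projection `π` of `S` fixing each monomial not in `I_G` and
annihilating each monomial in `I_G`. -/
def piMap : MvPolynomial (Fin n) k →ₗ[k] MvPolynomial (Fin n) k :=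
  (MvPolynomial.basisMonomials (Fin n) k).constr ℕ fun α =>
    if monomial α (1 : k) ∈ edgeIdeal G k then 0 else monomial α (1 : k)

/-- The `ℕⁿ`-multidegree of the basis vector `x^α [σ|τ]`: `α + Σ_{i ∈ σ∪τ} eᵢ`. -/
def mdeg (e : Cell n) (α : Fin n →₀ ℕ) : Fin n →₀ ℕ :=
  α + ∑ i ∈ e.1 ∪ e.2, Finsupp.single i 1

/-- The `μ`-homogeneous component of the resolution (as a `k`-subspace). -/
def Hsub (μ : Fin n →₀ ℕ) : Submodule k (Ftot n k) :=
  Submodule.span k {f : Ftot n k |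
    ∃ (e : Cell n) (α : Fin n →₀ ℕ), IsBasisCell G e ∧ mdeg e α = μ ∧
      f = Finsupp.single e (monomial α (1 : k))}

/-!
Write `d[σ|τ] = ∂[σ|τ] + R`, where `R` collects the terms `±x_i [σ∖i|τ]` with `i ≠ min σ`
and `±x_i [σ|τ∖i]` with `i ≠ max τ`. Each such term is `±x_i e` with `min σ_e < i ≤ max τ_e`,
so it suffices that `c` kills `x_i (e ⋆ e₂)` in that range.

This follows from an invariant of the terms `x^β [σ'|τ']` of a product `e ⋆ e₂`, proved along
the recursion defining `⋆`: `max τ'` bounds `supp β`, `τ_e` and `τ_{e₂}` from above and, when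
`τ'` is a singleton, `min σ'` bounds `supp β`, `σ_e` and `σ_{e₂}` from below. Multiplying such
a term by `x_i` then creates no index above `max τ'` (so `C₁ = ∅`) and, when `|τ'| = 1`, none
below `min σ'` (so `C₂ = ∅`); hence `c` vanishes on it. Propagating the invariant through the
degree-one step `d[{i}|{j}] = x_i x_j` is where the cointerval hypothesis enters: a neighbour
`j > i` of `i` makes every `v ≥ j` a neighbour of `i`.
-/

section Cells

theorem sym_of_isBasisCell {e : Cell n} (h : IsBasisCell G e) :
    sym G k e = Finsupp.single e 1 := if_pos h

theorem isBasisCell_empty : IsBasisCell G ((∅, ∅) : Cell n) := Or.inl rfl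

theorem isBasisCell_pair {i j : Fin n} (hij : i < j) (hadj : G.Adj i j) :
    IsBasisCell G (({i}, {j}) : Cell n) := by
  refine Or.inr ⟨Finset.singleton_nonempty i, Finset.singleton_nonempty j,
    Finset.disjoint_singleton.2 hij.ne, ?_, ?_⟩ <;> simp_all

variable {G}

theorem IsBasisCell.lt {e : Cell n} (h : IsBasisCell G e) {s u : Fin n}
    (hs : s ∈ e.1) (hu : u ∈ e.2) : s < u := by
  rcases h with rfl | h
  · simp at hs
  · exact h.2.2.2.1 s hs u hu

theorem IsBasisCell.nonempty {e : Cell n} (h : IsBasisCell G e)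
    (hne : e ≠ ((∅, ∅) : Cell n)) : e.1.Nonempty ∧ e.2.Nonempty := by
  rcases h with h | h
  · exact absurd h hne
  · exact ⟨h.1, h.2.1⟩

theorem IsBasisCell.eq_empty_of_cellDeg_eq_zero {e : Cell n} (h : IsBasisCell G e)
    (hd : cellDeg e = 0) : e = ((∅, ∅) : Cell n) := by
  by_contra hne
  obtain ⟨h1, h2⟩ := h.nonempty hne
  have := h1.card_pos
  have := h2.card_pos
  unfold cellDeg at hd
  omega

theorem IsBasisCell.eq_pair {e : Cell n} (hb : IsBasisCell G e)
    (h2 : e.1.card + e.2.card = 2) :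
    ∃ i j : Fin n, i < j ∧ G.Adj i j ∧ e = (({i}, {j}) : Cell n) := by
  rcases hb with rfl | ⟨hσ, hτ, -, hlt, hadj⟩
  · simp at h2
  have := hσ.card_pos
  have := hτ.card_pos
  obtain ⟨i, hi⟩ := Finset.card_eq_one.1 (show e.1.card = 1 by omega)
  obtain ⟨j, hj⟩ := Finset.card_eq_one.1 (show e.2.card = 1 by omega)
  refine ⟨i, j, hlt i (by simp [hi]) j (by simp [hj]),
    hadj i (by simp [hi]) j (by simp [hj]) (by simp [hj]), Prod.ext hi hj⟩

def AdjUpwardClosed (G : SimpleGraph (Fin n)) : Prop :=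
  ∀ ⦃i u v : Fin n⦄, G.Adj i u → i < u → u ≤ v → G.Adj i v

theorem cigraph_adjUpwardClosed (a b : Fin n → ℝ) (hab : ∀ i, a i ≤ b i)
    (hmono : ∀ i j : Fin n, i < j → a i ≤ a j) : AdjUpwardClosed (cigraph n a b) := by
  intro i u v hadj hiu huv
  rcases huv.eq_or_lt with rfl | huv
  · exact hadj
  have hbu : b i < a u := by
    by_contra! hc
    exact Set.not_disjoint_iff.2
      ⟨a u, Set.mem_Icc.2 ⟨hmono i u hiu, hc⟩, Set.mem_Icc.2 ⟨le_rfl, hab u⟩⟩ hadj.2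
  refine ⟨(hiu.trans huv).ne, Set.disjoint_left.2 fun x hx hx' => ?_⟩
  linarith [hx.2, hx'.1, hmono u v huv]

end Cells

section Exponents

theorem mem_support_add_single {β : Fin n →₀ ℕ} {i l : Fin n}
    (h : l ∈ (β + Finsupp.single i 1).support) : l ∈ β.support ∨ l = i :=
  (Finset.mem_union.1 (Finsupp.support_add h)).imp_right fun h =>
    Finset.mem_singleton.1 (Finsupp.support_single_subset h)

theorem support_add_single_subset (β : Fin n →₀ ℕ) (i : Fin n) :
    (β + Finsupp.single i 1).support ⊆ insert i β.support := fun _ hl =>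
  (mem_support_add_single hl).elim Finset.mem_insert_of_mem fun h =>
    h ▸ Finset.mem_insert_self _ _

theorem eq_or_eq_of_mem_support_single_add_single {i j m : Fin n}
    (h : m ∈ (Finsupp.single j 1 + Finsupp.single i 1 : Fin n →₀ ℕ).support) :
    m = i ∨ m = j := by
  rcases mem_support_add_single h with h | h
  · exact Or.inr (Finset.mem_singleton.1 (Finsupp.support_single_subset h))
  · exact Or.inl h

theorem max_lt_of_forall_lt {s : Finset (Fin n)} {l : Fin n} (h : ∀ u ∈ s, u < l) :
    s.max < l :=
  (Finset.sup_lt_iff (WithBot.bot_lt_coe l)).2 fun u hu => WithBot.coe_lt_coe.2 (h u hu)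

theorem lt_min_of_forall_lt {s : Finset (Fin n)} {l : Fin n} (h : ∀ u ∈ s, l < u) :
    (l : WithTop (Fin n)) < s.min :=
  (Finset.lt_inf_iff (WithTop.coe_lt_top l)).2 fun u hu => WithTop.coe_lt_coe.2 (h u hu)

theorem max_support_add_single_le (β : Fin n →₀ ℕ) (j : Fin n) :
    (β + Finsupp.single j 1).support.max ≤ max ↑j β.support.max := by
  rw [← Finset.max_insert]
  exact Finset.max_mono (support_add_single_subset β j)

theorem min_le_min_support_add_single (β : Fin n →₀ ℕ) (j : Fin n) :
    min ↑j β.support.min ≤ (β + Finsupp.single j 1).support.min := by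
  rw [← Finset.min_insert]
  exact Finset.min_mono (support_add_single_subset β j)

theorem C1set_add_subset {τ : Finset (Fin n)} {β δ : Fin n →₀ ℕ}
    (h : β.support.max ≤ τ.max) : C1set τ (β + δ) ⊆ δ.support := by
  intro l hl
  obtain ⟨hls, hlt⟩ := Finset.mem_filter.1 hl
  refine (Finset.mem_union.1 (Finsupp.support_add hls)).resolve_left fun hβ => ?_
  have := Finset.le_max hβ
  have := max_lt_of_forall_lt hlt
  order

theorem C2set_add_subset {σ τ : Finset (Fin n)} {β δ : Fin n →₀ ℕ}
    (h : σ.min ≤ β.support.min) : C2set G σ τ (β + δ) ⊆ δ.support := by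
  intro l hl
  obtain ⟨hls, hlt, -⟩ := Finset.mem_filter.1 hl
  refine (Finset.mem_union.1 (Finsupp.support_add hls)).resolve_left fun hβ => ?_
  have := Finset.min_le hβ
  have := lt_min_of_forall_lt hlt
  order

theorem C3set_add_subset {σ : Finset (Fin n)} {β δ : Fin n →₀ ℕ}
    (h : σ.min ≤ β.support.min) : C3set G σ (β + δ) ⊆ δ.support := by
  intro l hl
  obtain ⟨hls, hlt, -⟩ := Finset.mem_filter.1 hl
  refine (Finset.mem_union.1 (Finsupp.support_add hls)).resolve_left fun hβ => ?_
  have := Finset.min_le hβ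
  have := lt_min_of_forall_lt hlt
  order

end Exponents

section Terms

theorem Dmap_single (e : Cell n) : Dmap G k (Finsupp.single e 1) = diffCell G k e := by
  simp [Dmap]

theorem Pmap_single (e : Cell n) : Pmap G k (Finsupp.single e 1) = partialCell G k e := by
  simp [Pmap]

theorem biext_single_right (b : Cell n → Cell n → Ftot n k) (f : Ftot n k) (d : Cell n) :
    biext k b f (Finsupp.single d 1) =
      Finsupp.linearCombination (MvPolynomial (Fin n) k) (fun c => b c d) f := by
  simp [biext, Finsupp.linearCombination_apply, Finsupp.sum]

theorem biext_single_left (b : Cell n → Cell n → Ftot n k) (c : Cell n) (g : Ftot n k) :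
    biext k b (Finsupp.single c 1) g =
      Finsupp.linearCombination (MvPolynomial (Fin n) k) (b c) g := by
  simp [biext, Finsupp.linearCombination_apply, Finsupp.sum]

theorem linearCombination_sym (W : Cell n → Ftot n k) (c : Cell n) :
    Finsupp.linearCombination (MvPolynomial (Fin n) k) W (sym G k c) =
      if IsBasisCell G c then W c else 0 := by
  unfold sym
  split_ifs <;> simp

theorem Cmap_single_monomial (e : Cell n) (α : Fin n →₀ ℕ) (c : k) :
    Cmap G k (Finsupp.single e (monomial α c)) = c • cMono G k e α := by
  have hbasis : (Finsupp.single e (monomial α c) : Ftot n k) = c • FBasis n k ⟨e, α⟩ := by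
    simp [FBasis, Finsupp.smul_single, MvPolynomial.smul_monomial]
  rw [hbasis, map_smul, Cmap, Module.Basis.constr_basis]

theorem neg_one_pow_smul_eq (m : ℕ) (f : Ftot n k) :
    ((-1 : MvPolynomial (Fin n) k) ^ m) • f = ((-1 : k) ^ m) • f := by
  ext e : 1
  rw [Finsupp.smul_apply, Finsupp.smul_apply, smul_eq_mul, MvPolynomial.smul_eq_C_mul]
  simp

theorem Cmap_neg_one_pow_mul_X_smul (p : ℕ) (i : Fin n) (w : Ftot n k) :
    Cmap G k ((((-1 : MvPolynomial (Fin n) k) ^ p) * X i) • w) =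
      ((-1 : k) ^ p) • Cmap G k ((X i : MvPolynomial (Fin n) k) • w) := by
  rw [mul_smul, neg_one_pow_smul_eq, map_smul]

def TermsSatisfy (P : Cell n → (Fin n →₀ ℕ) → Prop) (f : Ftot n k) : Prop :=
  ∀ e α, coeff α (f e) ≠ 0 → P e α

variable {k} {P Q : Cell n → (Fin n →₀ ℕ) → Prop}

theorem eq_zero_of_termsSatisfy_false {f : Ftot n k}
    (h : TermsSatisfy k (fun _ _ => False) f) : f = 0 := by
  ext e α
  by_contra hne
  exact h e α hne

theorem TermsSatisfy.mono {f : Ftot n k} (hf : TermsSatisfy k P f)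
    (hPQ : ∀ e α, P e α → Q e α) : TermsSatisfy k Q f :=
  fun e α h => hPQ e α (hf e α h)

theorem termsSatisfy_zero : TermsSatisfy k P 0 := by
  intro e α h
  simp at h

theorem termsSatisfy_single_one {c : Cell n} (h : P c 0) :
    TermsSatisfy k P (Finsupp.single c 1) := by
  intro e α hne
  rcases eq_or_ne e c with rfl | hec
  · rw [Finsupp.single_eq_same, coeff_one] at hne
    obtain rfl : α = 0 := by
      by_contra h0
      exact hne (if_neg (Ne.symm h0))
    exact h
  · simp [Finsupp.single_eq_of_ne hec] at hne

theorem TermsSatisfy.add {f g : Ftot n k} (hf : TermsSatisfy k P f)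
    (hg : TermsSatisfy k P g) : TermsSatisfy k P (f + g) := by
  intro e α h
  rw [Finsupp.add_apply, coeff_add] at h
  by_cases hfe : coeff α (f e) = 0
  · exact hg e α (by simpa [hfe] using h)
  · exact hf e α hfe

theorem termsSatisfy_sum {ι : Type*} {s : Finset ι} {v : ι → Ftot n k}
    (h : ∀ i ∈ s, TermsSatisfy k P (v i)) : TermsSatisfy k P (∑ i ∈ s, v i) := by
  induction s using Finset.induction_on with
  | empty => simpa using termsSatisfy_zero
  | insert _ _ hx ih =>
    rw [Finset.sum_insert hx]
    exact (h _ (Finset.mem_insert_self _ _)).add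
      (ih fun i hi => h i (Finset.mem_insert_of_mem hi))

theorem TermsSatisfy.smul {f : Ftot n k} (hf : TermsSatisfy k P f) (c : k) :
    TermsSatisfy k P (c • f) := by
  intro e α h
  refine hf e α fun h0 => h ?_
  rw [Finsupp.smul_apply, ← MvPolynomial.C_mul', coeff_C_mul, h0, mul_zero]

theorem TermsSatisfy.neg_one_pow_smul {f : Ftot n k} (hf : TermsSatisfy k P f) (m : ℕ) :
    TermsSatisfy k P (((-1 : MvPolynomial (Fin n) k) ^ m) • f) := by
  rw [neg_one_pow_smul_eq]
  exact hf.smul _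

theorem TermsSatisfy.X_smul {f : Ftot n k} (hf : TermsSatisfy k P f) (i : Fin n) :
    TermsSatisfy k (fun e α => ∃ β, α = β + Finsupp.single i 1 ∧ P e β)
      ((X i : MvPolynomial (Fin n) k) • f) := by
  intro e α h
  rw [Finsupp.smul_apply, smul_eq_mul, coeff_X_mul'] at h
  split_ifs at h with hi
  · refine ⟨α - Finsupp.single i 1, ?_, hf e _ h⟩
    rw [tsub_add_cancel_of_le (Finsupp.single_le_iff.2 (Nat.one_le_iff_ne_zero.2
      (Finsupp.mem_support_iff.1 hi)))]
  · exact absurd rfl h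

theorem termsSatisfy_monomial_smul_sym {c : Cell n} {δ : Fin n →₀ ℕ}
    (h : IsBasisCell G c → P c δ) :
    TermsSatisfy k P (monomial δ (1 : k) • sym G k c) := by
  unfold sym
  split_ifs with hc
  · intro e α hne
    rw [Finsupp.smul_single', mul_one] at hne
    obtain ⟨rfl, rfl⟩ : e = c ∧ α = δ := by
      by_contra hcon
      apply hne
      rcases eq_or_ne e c with rfl | hec
      · rw [Finsupp.single_eq_same, coeff_monomial, if_neg fun h => hcon ⟨rfl, h.symm⟩]
      · rw [Finsupp.single_eq_of_ne hec, coeff_zero]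
    exact h hc
  · simpa using termsSatisfy_zero

variable (k) in
theorem TermsSatisfy.Cmap {f : Ftot n k}
    (hf : TermsSatisfy k (fun e α => TermsSatisfy k P (cMono G k e α)) f) :
    TermsSatisfy k P (Cmap G k f) := by
  have hdecomp : f = ∑ e ∈ f.support, ∑ α ∈ (f e).support,
      Finsupp.single e (monomial α (coeff α (f e))) := by
    conv_lhs => rw [← Finsupp.sum_single f]
    refine Finset.sum_congr rfl fun e _ => ?_
    conv_lhs => rw [(f e).as_sum]
    exact map_sum (Finsupp.singleAddHom e) _ _
  rw [hdecomp, map_sum]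
  refine termsSatisfy_sum fun e _ => ?_
  rw [map_sum]
  refine termsSatisfy_sum fun α hα => ?_
  rw [Cmap_single_monomial]
  exact (hf e α (MvPolynomial.mem_support_iff.1 hα)).smul _

theorem termsSatisfy_Cmap_X_smul {w : Ftot n k} (hw : TermsSatisfy k P w) {i : Fin n}
    (hstep : ∀ e β, P e β → TermsSatisfy k Q (cMono G k e (β + Finsupp.single i 1))) :
    TermsSatisfy k Q (Cmap G k ((X i : MvPolynomial (Fin n) k) • w)) :=
  TermsSatisfy.Cmap G k fun _ _ h => by
    obtain ⟨β, rfl, hβ⟩ := hw.X_smul i _ _ h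
    exact hstep _ _ hβ

theorem Cmap_eq_zero {f : Ftot n k}
    (hf : TermsSatisfy k (fun e α => cMono G k e α = 0) f) : Cmap G k f = 0 :=
  eq_zero_of_termsSatisfy_false <| TermsSatisfy.Cmap G k fun e α h => by
    dsimp only
    rw [hf e α h]
    exact termsSatisfy_zero

end Terms

section Homotopy

/-- The terms `x^α' e'` of `c(x^α e)` for a basis cell `e ≠ [∅|∅]`, one constructor per summand
in the definition of `c`. -/
inductive HomotopyTerm (e : Cell n) (α : Fin n →₀ ℕ) : Cell n → (Fin n →₀ ℕ) → Prop
  | extend {m : Fin n} : IsGreatest (C1set e.2 α : Set (Fin n)) m →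
      HomotopyTerm e α (e.1, insert m e.2) (α - Finsupp.single m 1)
  | exchange {t m m₃ : Fin n} : e.2 = {t} → IsGreatest (C1set e.2 α : Set (Fin n)) m →
      IsLeast (C3set G e.1 α : Set (Fin n)) m₃ →
      HomotopyTerm e α (insert m₃ e.1, {m})
        (α + Finsupp.single t 1 - Finsupp.single m 1 - Finsupp.single m₃ 1)
  | prepend {m₂ : Fin n} : e.2.card = 1 → C1set e.2 α = ∅ →
      IsLeast (C2set G e.1 e.2 α : Set (Fin n)) m₂ →
      HomotopyTerm e α (insert m₂ e.1, e.2) (α - Finsupp.single m₂ 1)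

theorem termsSatisfy_cMono {e : Cell n} (hτ : e.2.Nonempty) (α : Fin n →₀ ℕ) :
    TermsSatisfy k (fun e' α' => IsBasisCell G e' ∧ HomotopyTerm G e α e' α')
      (cMono G k e α) := by
  by_cases hb : IsBasisCell G e
  swap
  · simpa [cMono, hb] using termsSatisfy_zero
  rw [cMono, if_pos hb, dif_pos hτ]
  split_ifs with hc h1 h3 h2 h1'
  · obtain ⟨t, ht⟩ := Finset.card_eq_one.1 hc
    have hmax : e.2.max' hτ = t := by simp [ht]
    refine (termsSatisfy_monomial_smul_sym G fun hb' => ⟨hb', .extend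
      (Finset.isGreatest_max' _ h1)⟩).add (TermsSatisfy.neg_one_pow_smul ?_ _)
    refine termsSatisfy_monomial_smul_sym G fun hb' => ⟨hb', ?_⟩
    rw [hmax]
    exact .exchange ht (Finset.isGreatest_max' _ h1) (Finset.isLeast_min' _ h3)
  · simpa using termsSatisfy_monomial_smul_sym G fun hb' => ⟨hb', .extend
      (Finset.isGreatest_max' _ h1)⟩
  · exact TermsSatisfy.neg_one_pow_smul (termsSatisfy_monomial_smul_sym G fun hb' => ⟨hb',
      .prepend hc (Finset.not_nonempty_iff_eq_empty.1 h1) (Finset.isLeast_min' _ h2)⟩) _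
  · exact termsSatisfy_zero
  · exact termsSatisfy_monomial_smul_sym G fun hb' => ⟨hb', .extend
      (Finset.isGreatest_max' _ h1')⟩
  · exact termsSatisfy_zero

theorem dvdSet_pair {i j : Fin n} (hij : i < j) (hadj : G.Adj i j) :
    DvdSet G (Finsupp.single i 1 + Finsupp.single j 1) = {(i, j)} := by
  ext ⟨p, q⟩
  simp only [DvdSet, Finset.mem_filter, Finset.mem_univ, true_and, Finset.mem_singleton,
    Prod.mk.injEq, Finsupp.add_apply, Finsupp.single_apply]
  constructor
  · rintro ⟨hpq, -, hp, hq⟩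
    split_ifs at hp hq <;> subst_vars <;> omega
  · rintro ⟨rfl, rfl⟩
    simp [hij, hadj, hij.ne]

theorem cMono_empty_pair {i j : Fin n} (hij : i < j) (hadj : G.Adj i j) :
    cMono G k ((∅, ∅) : Cell n) (Finsupp.single i 1 + Finsupp.single j 1) =
      Finsupp.single (({i}, {j}) : Cell n) 1 := by
  simp [cMono, isBasisCell_empty, cZero, dvdSet_pair G hij hadj, Finset.filter_singleton,
    sym_of_isBasisCell G k (isBasisCell_pair G hij hadj)]

end Homotopy

section Admissible

/-- `Finset.max` and `Finset.min` live in `WithBot` and `WithTop`, so an empty `lo` or `hi`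
imposes no condition. -/
def Encloses (e : Cell n) (lo hi : Finset (Fin n)) : Prop :=
  hi.max ≤ e.2.max ∧ (e.2.card = 1 → e.1.min ≤ lo.min)

theorem encloses_empty (e : Cell n) : Encloses e ∅ ∅ :=
  ⟨by simp, fun _ => by simp⟩

theorem Encloses.insert_fst {e : Cell n} {lo hi lo' : Finset (Fin n)} (h : Encloses e lo hi)
    {j : Fin n} (hlo : lo' ⊆ insert j lo) : Encloses (insert j e.1, e.2) lo' hi := by
  refine ⟨h.1, fun hc => (?_ : _ ≤ (insert j lo).min).trans (Finset.min_mono hlo)⟩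
  rw [Finset.min_insert, Finset.min_insert]
  exact min_le_min_left _ (h.2 hc)

theorem Encloses.insert_snd {e : Cell n} {lo hi lo' hi' : Finset (Fin n)}
    (h : Encloses e lo hi) (hne : e.2.Nonempty) {j : Fin n} (hj : j ∉ e.2)
    (hhi : hi'.max ≤ max ↑j hi.max) : Encloses (e.1, insert j e.2) lo' hi' := by
  refine ⟨hhi.trans ?_, fun hc => absurd hc ?_⟩
  · rw [Finset.max_insert]
    exact max_le_max le_rfl h.1
  · rw [Finset.card_insert_of_notMem hj]
    have := hne.card_pos
    omega

/-- The invariant satisfied by every term `x^β e` of `cA ⋆ cB`. -/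
structure AdmissibleTerm (cA cB e : Cell n) (β : Fin n →₀ ℕ) : Prop where
  isBasisCell : IsBasisCell G e
  snd_nonempty : e.2.Nonempty
  encloses_support : Encloses e β.support β.support
  encloses_left : Encloses e cA.1 cA.2
  encloses_right : Encloses e cB.1 cB.2

theorem admissibleTerm_pair {i j : Fin n} (hij : i < j) (hadj : G.Adj i j) :
    AdmissibleTerm G (({i}, {j}) : Cell n) ((∅, ∅) : Cell n) (({i}, {j}) : Cell n) 0 :=
  ⟨isBasisCell_pair G hij hadj, Finset.singleton_nonempty j, by simp [Encloses],
    ⟨le_rfl, fun _ => le_rfl⟩, encloses_empty _⟩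

variable {G k} {cA cB e e' : Cell n} {β α' : Fin n →₀ ℕ} {i j : Fin n}

theorem AdmissibleTerm.symm (h : AdmissibleTerm G cA cB e β) : AdmissibleTerm G cB cA e β :=
  ⟨h.isBasisCell, h.snd_nonempty, h.encloses_support, h.encloses_right, h.encloses_left⟩

theorem AdmissibleTerm.fst_nonempty (h : AdmissibleTerm G cA cB e β) : e.1.Nonempty :=
  (h.isBasisCell.nonempty fun he => by simpa [he] using h.snd_nonempty).1

theorem AdmissibleTerm.of_erase_fst (hA : IsBasisCell G cA) (hA2 : cA.2.Nonempty)
    (hj : j ∈ cA.1) (hg : AdmissibleTerm G (cA.1.erase j, cA.2) cB e β)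
    (hb' : IsBasisCell G e') (ht : HomotopyTerm G e (β + Finsupp.single j 1) e' α') :
    AdmissibleTerm G cA cB e' α' := by
  obtain ⟨u, hu⟩ := hA2
  have hjτ : (j : WithBot (Fin n)) ≤ e.2.max :=
    (WithBot.coe_le_coe.2 (hA.lt hj hu).le).trans ((Finset.le_max hu).trans hg.encloses_left.1)
  have hC1 : ∀ m, m ∉ C1set e.2 (β + Finsupp.single j 1) := fun m hm => by
    obtain rfl : m = j := Finset.mem_singleton.1 (Finsupp.support_single_subset
      (C1set_add_subset hg.encloses_support.1 hm))
    have := max_lt_of_forall_lt (Finset.mem_filter.1 hm).2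
    order
  cases ht with
  | extend hm => exact absurd hm.1 (hC1 _)
  | exchange _ hm _ => exact absurd hm.1 (hC1 _)
  | @prepend m hc _ hm =>
    obtain rfl : m = j := Finset.mem_singleton.1 (Finsupp.support_single_subset
      (C2set_add_subset G (hg.encloses_support.2 hc) hm.1))
    rw [add_tsub_cancel_right]
    exact ⟨hb', hg.snd_nonempty, hg.encloses_support.insert_fst (Finset.subset_insert _ _),
      hg.encloses_left.insert_fst (Finset.insert_erase hj).ge,
      hg.encloses_right.insert_fst (Finset.subset_insert _ _)⟩

theorem AdmissibleTerm.of_erase_snd (hA : IsBasisCell G cA) (hA1 : cA.1.Nonempty)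
    (hj : j ∈ cA.2) (hg : AdmissibleTerm G (cA.1, cA.2.erase j) cB e β)
    (hb' : IsBasisCell G e') (ht : HomotopyTerm G e (β + Finsupp.single j 1) e' α') :
    AdmissibleTerm G cA cB e' α' := by
  obtain ⟨s, hs⟩ := hA1
  have hσj : e.2.card = 1 → e.1.min < j := fun hc =>
    ((hg.encloses_left.2 hc).trans (Finset.min_le hs)).trans_lt
      (WithTop.coe_lt_coe.2 (hA.lt hs hj))
  cases ht with
  | @extend m hm =>
    obtain rfl : m = j := Finset.mem_singleton.1 (Finsupp.support_single_subset
      (C1set_add_subset hg.encloses_support.1 hm.1))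
    have hmτ : m ∉ e.2 := fun h => ((Finset.mem_filter.1 hm.1).2 _ h).false
    have hne := hg.snd_nonempty
    rw [add_tsub_cancel_right]
    refine ⟨hb', Finset.insert_nonempty _ _,
      hg.encloses_support.insert_snd hne hmτ (le_max_right _ _),
      hg.encloses_left.insert_snd hne hmτ ?_,
      hg.encloses_right.insert_snd hne hmτ (le_max_right _ _)⟩
    rw [← Finset.max_insert, Finset.insert_erase hj]
  | @exchange t m m₃ ht _ hm₃ =>
    obtain rfl : m₃ = j := Finset.mem_singleton.1 (Finsupp.support_single_subset
      (C3set_add_subset G (hg.encloses_support.2 (by simp [ht])) hm₃.1))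
    have := lt_min_of_forall_lt (Finset.mem_filter.1 hm₃.1).2.1
    have := hσj (by simp [ht])
    order
  | @prepend m hc _ hm =>
    obtain rfl : m = j := Finset.mem_singleton.1 (Finsupp.support_single_subset
      (C2set_add_subset G (hg.encloses_support.2 hc) hm.1))
    have := lt_min_of_forall_lt (Finset.mem_filter.1 hm.1).2.1
    have := hσj hc
    order

theorem AdmissibleTerm.pair_of_insert_snd (hij : i < j)
    (hg : AdmissibleTerm G ((∅, ∅) : Cell n) cB e β) (hb' : IsBasisCell G (e.1, insert j e.2))
    (hτj : ∀ u ∈ e.2, u < j) :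
    AdmissibleTerm G (({i}, {j}) : Cell n) cB (e.1, insert j e.2) (β + Finsupp.single i 1) := by
  have hjτ : j ∉ e.2 := fun h => (hτj j h).false
  have hne := hg.snd_nonempty
  refine ⟨hb', Finset.insert_nonempty _ _, hg.encloses_support.insert_snd hne hjτ ?_,
    (encloses_empty e).insert_snd hne hjτ (by simp),
    hg.encloses_right.insert_snd hne hjτ (le_max_right _ _)⟩
  exact (max_support_add_single_le β i).trans
    (max_le_max (WithBot.coe_le_coe.2 hij.le) le_rfl)

theorem AdmissibleTerm.pair_of_exchange {t : Fin n}
    (hg : AdmissibleTerm G ((∅, ∅) : Cell n) cB e β) (hb' : IsBasisCell G (insert i e.1, {j}))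
    (ht : e.2 = {t}) (htj : t < j) :
    AdmissibleTerm G (({i}, {j}) : Cell n) cB (insert i e.1, {j}) (β + Finsupp.single t 1) := by
  have hc : e.2.card = 1 := by simp [ht]
  have hτj : e.2.max ≤ j := by simpa [ht] using htj.le
  obtain ⟨s, hs⟩ := hg.fst_nonempty
  have hσt : e.1.min ≤ t :=
    (Finset.min_le hs).trans (WithTop.coe_le_coe.2 (hg.isBasisCell.lt hs (by simp [ht])).le)
  have hσi : (insert i e.1).min ≤ e.1.min := Finset.min_mono (Finset.subset_insert _ _)
  refine ⟨hb', Finset.singleton_nonempty j, ⟨?_, fun _ => ?_⟩,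
    ⟨by simp, fun _ => Finset.min_le (by simp)⟩,
    ⟨hg.encloses_right.1.trans (by simpa using hτj),
      fun _ => hσi.trans (hg.encloses_right.2 hc)⟩⟩
  · refine (max_support_add_single_le β t).trans (max_le (by simpa using htj.le) ?_)
    exact hg.encloses_support.1.trans (by simpa using hτj)
  · exact hσi.trans ((le_min hσt (hg.encloses_support.2 hc)).trans
      (min_le_min_support_add_single β t))

theorem AdmissibleTerm.pair_of_insert_fst (hij : i < j)
    (hg : AdmissibleTerm G ((∅, ∅) : Cell n) cB e β) (hb' : IsBasisCell G (insert i e.1, e.2))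
    (hc : e.2.card = 1) (hjτ : ↑j ≤ e.2.max) :
    AdmissibleTerm G (({i}, {j}) : Cell n) cB (insert i e.1, e.2) (β + Finsupp.single j 1) := by
  have hσi : (insert i e.1).min ≤ e.1.min := Finset.min_mono (Finset.subset_insert _ _)
  refine ⟨hb', hg.snd_nonempty, ⟨?_, fun _ => ?_⟩,
    ⟨by simpa using hjτ, fun _ => Finset.min_le (by simp)⟩,
    ⟨hg.encloses_right.1, fun _ => hσi.trans (hg.encloses_right.2 hc)⟩⟩
  · exact (max_support_add_single_le β j).trans (max_le hjτ hg.encloses_support.1)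
  · refine le_trans ?_ (min_le_min_support_add_single β j)
    rw [Finset.min_insert]
    exact min_le_min (WithTop.coe_le_coe.2 hij.le) (hg.encloses_support.2 hc)

theorem eq_of_isGreatest_C1set_pair (hij : i < j) (hβ : β.support.max ≤ e.2.max) {m : Fin n}
    (hm : IsGreatest (C1set e.2 (β + Finsupp.single j 1 + Finsupp.single i 1) : Set (Fin n)) m) :
    m = j ∧ ∀ u ∈ e.2, u < j := by
  have hlt := (Finset.mem_filter.1 hm.1).2
  have hmj : m = i ∨ m = j := eq_or_eq_of_mem_support_single_add_single
    (C1set_add_subset hβ ((add_assoc β _ _) ▸ hm.1))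
  have hτj : ∀ u ∈ e.2, u < j := fun u hu =>
    (hlt u hu).trans_le (hmj.elim (fun h => h ▸ hij.le) le_of_eq)
  refine ⟨hmj.resolve_left fun hmi => ?_, hτj⟩
  have hjC1 : j ∈ C1set e.2 (β + Finsupp.single j 1 + Finsupp.single i 1) :=
    Finset.mem_filter.2 ⟨by simp [hij.ne], hτj⟩
  exact absurd (hm.2 hjC1) (hmi ▸ hij.not_ge)

theorem eq_of_isLeast_C3set_pair {s : Fin n} (hβ : e.1.min ≤ β.support.min) (hs : s ∈ e.1)
    (hsj : s < j) {m₃ : Fin n}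
    (hm₃ : IsLeast (C3set G e.1 (β + Finsupp.single j 1 + Finsupp.single i 1) : Set (Fin n)) m₃) :
    m₃ = i := by
  refine (eq_or_eq_of_mem_support_single_add_single (C3set_add_subset G hβ
    ((add_assoc β _ _) ▸ hm₃.1))).resolve_right fun hm₃j => ?_
  exact absurd ((Finset.mem_filter.1 hm₃.1).2.1 s hs) (hm₃j ▸ hsj.not_gt)

theorem eq_of_isLeast_C2set_pair (hAM : AdjUpwardClosed G) (hij : i < j) (hadj : G.Adj i j)
    (hβ : e.1.min ≤ β.support.min) {t : Fin n} (ht : e.2 = {t}) (hjt : j ≤ t) {m₂ : Fin n}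
    (hm₂ : IsLeast (C2set G e.1 e.2 (β + Finsupp.single j 1 + Finsupp.single i 1) :
      Set (Fin n)) m₂) : m₂ = i := by
  refine (eq_or_eq_of_mem_support_single_add_single (C2set_add_subset G hβ
    ((add_assoc β _ _) ▸ hm₂.1))).resolve_right fun hm₂j => ?_
  rw [hm₂j] at hm₂
  have hjσ := (Finset.mem_filter.1 hm₂.1).2.1
  have hiC2 : i ∈ C2set G e.1 e.2 (β + Finsupp.single j 1 + Finsupp.single i 1) :=
    Finset.mem_filter.2 ⟨by simp, fun s hs => hij.trans (hjσ s hs), fun u hu _ => by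
      rw [ht, Finset.mem_singleton] at hu
      exact hu ▸ hAM hadj hij hjt⟩
  exact absurd (hm₂.2 hiC2) hij.not_ge

theorem AdmissibleTerm.of_empty (hAM : AdjUpwardClosed G) (hij : i < j) (hadj : G.Adj i j)
    (hg : AdmissibleTerm G ((∅, ∅) : Cell n) cB e β) (hb' : IsBasisCell G e')
    (ht : HomotopyTerm G e (β + Finsupp.single j 1 + Finsupp.single i 1) e' α') :
    AdmissibleTerm G (({i}, {j}) : Cell n) cB e' α' := by
  cases ht with
  | @extend m hm =>
    obtain ⟨rfl, hτm⟩ := eq_of_isGreatest_C1set_pair hij hg.encloses_support.1 hm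
    rw [add_right_comm, add_tsub_cancel_right]
    exact hg.pair_of_insert_snd hij hb' hτm
  | @exchange t m m₃ ht hm hm₃ =>
    obtain ⟨rfl, hτm⟩ := eq_of_isGreatest_C1set_pair hij hg.encloses_support.1 hm
    have htm : t < m := hτm t (by simp [ht])
    obtain ⟨s, hs⟩ := hg.fst_nonempty
    obtain rfl : m₃ = i := eq_of_isLeast_C3set_pair (hg.encloses_support.2 (by simp [ht])) hs
      ((hg.isBasisCell.lt hs (by simp [ht])).trans htm) hm₃
    have hexp : β + Finsupp.single m 1 + Finsupp.single m₃ 1 + Finsupp.single t 1 -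
        Finsupp.single m 1 - Finsupp.single m₃ 1 = β + Finsupp.single t 1 := by
      ext l
      simp only [Finsupp.tsub_apply, Finsupp.add_apply]
      omega
    rw [hexp]
    exact hg.pair_of_exchange hb' ht htm
  | @prepend m₂ hc hC1 hm₂ =>
    obtain ⟨t, ht⟩ := Finset.card_eq_one.1 hc
    have hjt : j ≤ t := by
      by_contra! htj
      have : j ∈ C1set e.2 (β + Finsupp.single j 1 + Finsupp.single i 1) :=
        Finset.mem_filter.2 ⟨by simp [hij.ne], by simpa [ht] using htj⟩
      simp [hC1] at this
    obtain rfl := eq_of_isLeast_C2set_pair hAM hij hadj (hg.encloses_support.2 hc) ht hjt hm₂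
    rw [add_tsub_cancel_right]
    exact hg.pair_of_insert_fst hij hb' hc (by simpa [ht] using hjt)

theorem AdmissibleTerm.termsSatisfy_cMono {cA' : Cell n} {α : Fin n →₀ ℕ}
    (hg : AdmissibleTerm G cA' cB e β)
    (hstep : ∀ e' α', IsBasisCell G e' → HomotopyTerm G e α e' α' →
      AdmissibleTerm G cA cB e' α') :
    TermsSatisfy k (AdmissibleTerm G cA cB) (cMono G k e α) :=
  (EdgeRes.termsSatisfy_cMono G k hg.snd_nonempty α).mono fun e' α' h => hstep e' α' h.1 h.2

end Admissible

section Product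

/-- The term `±x_i [σ∖i|τ]` of `d[σ|τ]`. -/
def fstFace (e : Cell n) (i : Fin n) : Ftot n k :=
  (((-1 : MvPolynomial (Fin n) k) ^ (e.2.card + (e.1.filter fun j => i < j).card)) * X i) •
    sym G k (e.1.erase i, e.2)

/-- The term `±x_i [σ|τ∖i]` of `d[σ|τ]`. -/
def sndFace (e : Cell n) (i : Fin n) : Ftot n k :=
  (((-1 : MvPolynomial (Fin n) k) ^ ((e.2.filter fun j => i < j).card)) * X i) •
    sym G k (e.1, e.2.erase i)

theorem diffCell_of_three_le {e : Cell n} (hb : IsBasisCell G e)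
    (h3 : 3 ≤ e.1.card + e.2.card) :
    diffCell G k e = ∑ i ∈ e.1, fstFace G k e i + ∑ i ∈ e.2, sndFace G k e i := by
  rw [diffCell, if_pos hb, if_neg (by omega), if_pos h3]
  rfl

theorem diffCell_empty : diffCell G k ((∅, ∅) : Cell n) = 0 := by
  simp [diffCell, isBasisCell_empty]

theorem diffCell_pair {i j : Fin n} (hij : i < j) (hadj : G.Adj i j) :
    diffCell G k (({i}, {j}) : Cell n) =
      (X i * X j : MvPolynomial (Fin n) k) • Finsupp.single ((∅, ∅) : Cell n) 1 := by
  rw [diffCell, if_pos (isBasisCell_pair G hij hadj), if_pos (by simp),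
    sym_of_isBasisCell G k (isBasisCell_empty G), ← Finset.insert_eq, Finset.prod_pair hij.ne]

theorem Cmap_X_mul_X_smul_single_empty {i j : Fin n} (hij : i < j) (hadj : G.Adj i j) :
    Cmap G k ((X i * X j : MvPolynomial (Fin n) k) • Finsupp.single ((∅, ∅) : Cell n) 1) =
      Finsupp.single (({i}, {j}) : Cell n) 1 := by
  rw [Finsupp.smul_single', mul_one, X, X, monomial_mul, one_mul, Cmap_single_monomial,
    one_smul, cMono_empty_pair G k hij hadj]

theorem bstar_succ {N : ℕ} {cA cB : Cell n} (h : cellDeg cA + cellDeg cB ≠ 0) :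
    bstar G k (N + 1) cA cB =
      Cmap G k (Finsupp.linearCombination _ (fun c => bstar G k N c cB) (diffCell G k cA)) +
      ((-1 : MvPolynomial (Fin n) k) ^ cellDeg cA) •
        Cmap G k (Finsupp.linearCombination _ (bstar G k N cA) (diffCell G k cB)) := by
  rw [bstar, if_neg h, Dmap_single, Dmap_single, biext_single_right, biext_single_left]

theorem bstar_empty (N : ℕ) :
    bstar G k N ((∅, ∅) : Cell n) (∅, ∅) = 0 ∨
      bstar G k N ((∅, ∅) : Cell n) (∅, ∅) = Finsupp.single ((∅, ∅) : Cell n) 1 := by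
  cases N with
  | zero => exact Or.inl rfl
  | succ N => exact Or.inr (by rw [bstar, if_pos (by simp [cellDeg])])

variable {G k} {cPar cOth : Cell n} (W : Cell n → Ftot n k)

theorem termsSatisfy_Cmap_diffCell_of_three_le (hPar : IsBasisCell G cPar)
    (h3 : 3 ≤ cPar.1.card + cPar.2.card)
    (hW : ∀ c, IsBasisCell G c → c ≠ ((∅, ∅) : Cell n) →
      TermsSatisfy k (AdmissibleTerm G c cOth) (W c)) :
    TermsSatisfy k (AdmissibleTerm G cPar cOth)
      (Cmap G k (Finsupp.linearCombination (MvPolynomial (Fin n) k) W (diffCell G k cPar))) := by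
  obtain ⟨hσ, hτ⟩ := hPar.nonempty fun h => by simp [h] at h3
  rw [diffCell_of_three_le G k hPar h3]
  simp only [map_add, map_sum]
  refine (termsSatisfy_sum fun i hi => ?_).add (termsSatisfy_sum fun i hi => ?_)
  · rw [fstFace, map_smul, Cmap_neg_one_pow_mul_X_smul, linearCombination_sym]
    refine TermsSatisfy.smul ?_ _
    split_ifs with hbc
    · refine termsSatisfy_Cmap_X_smul G (hW _ hbc fun h => ?_) fun e β hg =>
        hg.termsSatisfy_cMono fun e' α' hb' ht => hg.of_erase_fst hPar hτ hi hb' ht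
      simp [Prod.ext_iff, hτ.ne_empty] at h
    · simpa using termsSatisfy_zero
  · rw [sndFace, map_smul, Cmap_neg_one_pow_mul_X_smul, linearCombination_sym]
    refine TermsSatisfy.smul ?_ _
    split_ifs with hbc
    · refine termsSatisfy_Cmap_X_smul G (hW _ hbc fun h => ?_) fun e β hg =>
        hg.termsSatisfy_cMono fun e' α' hb' ht => hg.of_erase_snd hPar hσ hi hb' ht
      simp [Prod.ext_iff, hσ.ne_empty] at h
    · simpa using termsSatisfy_zero

theorem termsSatisfy_Cmap_diffCell_pair (hAM : AdjUpwardClosed G) {i j : Fin n}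
    (hij : i < j) (hadj : G.Adj i j)
    (hW : cOth ≠ ((∅, ∅) : Cell n) →
      TermsSatisfy k (AdmissibleTerm G ((∅, ∅) : Cell n) cOth) (W (∅, ∅)))
    (hWempty : cOth = ((∅, ∅) : Cell n) →
      W (∅, ∅) = 0 ∨ W (∅, ∅) = Finsupp.single ((∅, ∅) : Cell n) 1) :
    TermsSatisfy k (AdmissibleTerm G (({i}, {j}) : Cell n) cOth)
      (Cmap G k (Finsupp.linearCombination (MvPolynomial (Fin n) k) W
        (diffCell G k (({i}, {j}) : Cell n)))) := by
  rw [diffCell_pair G k hij hadj, map_smul, Finsupp.linearCombination_single, one_smul]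
  by_cases hO : cOth = ((∅, ∅) : Cell n)
  · subst hO
    rcases hWempty rfl with h | h
    · rw [h, smul_zero, map_zero]
      exact termsSatisfy_zero
    · rw [h, Cmap_X_mul_X_smul_single_empty G k hij hadj]
      exact termsSatisfy_single_one (admissibleTerm_pair G hij hadj)
  · rw [mul_smul]
    refine termsSatisfy_Cmap_X_smul G ((hW hO).X_smul j) fun e β' ⟨β, hβ', hg⟩ => ?_
    subst hβ'
    exact hg.termsSatisfy_cMono fun e' α' hb' ht => hg.of_empty hAM hij hadj hb' ht

theorem termsSatisfy_Cmap_diffCell (hAM : AdjUpwardClosed G) (hPar : IsBasisCell G cPar)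
    (hW : ∀ c, IsBasisCell G c → ¬(c = ((∅, ∅) : Cell n) ∧ cOth = ((∅, ∅) : Cell n)) →
      TermsSatisfy k (AdmissibleTerm G c cOth) (W c))
    (hWempty : cOth = ((∅, ∅) : Cell n) →
      W (∅, ∅) = 0 ∨ W (∅, ∅) = Finsupp.single ((∅, ∅) : Cell n) 1) :
    TermsSatisfy k (AdmissibleTerm G cPar cOth)
      (Cmap G k (Finsupp.linearCombination (MvPolynomial (Fin n) k) W (diffCell G k cPar))) := by
  by_cases hE : cPar = ((∅, ∅) : Cell n)
  · rw [hE, diffCell_empty, map_zero, map_zero]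
    exact termsSatisfy_zero
  obtain ⟨hσ, hτ⟩ := hPar.nonempty hE
  by_cases h2 : cPar.1.card + cPar.2.card = 2
  · obtain ⟨i, j, hij, hadj, rfl⟩ := hPar.eq_pair h2
    exact termsSatisfy_Cmap_diffCell_pair W hAM hij hadj
      (fun hO => hW _ (isBasisCell_empty G) fun h => hO h.2) hWempty
  · have := hσ.card_pos
    have := hτ.card_pos
    exact termsSatisfy_Cmap_diffCell_of_three_le W hPar (by omega)
      fun c hc hne => hW c hc fun h => hne h.1

theorem termsSatisfy_bstar (hAM : AdjUpwardClosed G) (N : ℕ) {cA cB : Cell n}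
    (hA : IsBasisCell G cA) (hB : IsBasisCell G cB)
    (hne : ¬(cA = ((∅, ∅) : Cell n) ∧ cB = ((∅, ∅) : Cell n))) :
    TermsSatisfy k (AdmissibleTerm G cA cB) (bstar G k N cA cB) := by
  induction N generalizing cA cB with
  | zero => exact termsSatisfy_zero
  | succ N ih =>
    have hdeg : cellDeg cA + cellDeg cB ≠ 0 := fun h => hne
      ⟨hA.eq_empty_of_cellDeg_eq_zero (by omega), hB.eq_empty_of_cellDeg_eq_zero (by omega)⟩
    rw [bstar_succ G k hdeg]
    refine TermsSatisfy.add ?_ (TermsSatisfy.neg_one_pow_smul ?_ _)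
    · exact termsSatisfy_Cmap_diffCell _ hAM hA (fun c hc hne' => ih hc hB hne')
        fun hB' => hB' ▸ bstar_empty G k N
    · refine (termsSatisfy_Cmap_diffCell _ hAM hB (fun c hc hne' => ?_)
        fun hA' => hA' ▸ bstar_empty G k N).mono fun _ _ h => h.symm
      exact (ih hA hc fun h => hne' ⟨h.2, h.1⟩).mono fun _ _ h => h.symm

end Product

section Vanishing

theorem partialCell_of_three_le {e : Cell n} (hb : IsBasisCell G e)
    (h3 : 3 ≤ e.1.card + e.2.card) (hσ : e.1.Nonempty) (hτ : e.2.Nonempty) :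
    partialCell G k e = sndFace G k e (e.2.max' hτ) + fstFace G k e (e.1.min' hσ) := by
  have hfst : (e.1.filter fun j => e.1.min' hσ < j).card = e.1.card - 1 := by
    rw [← Finset.card_erase_of_mem (e.1.min'_mem hσ)]
    congr 1
    ext l
    simp only [Finset.mem_filter, Finset.mem_erase]
    exact ⟨fun h => ⟨h.2.ne', h.1⟩,
      fun h => ⟨h.2, lt_of_le_of_ne (e.1.min'_le l h.2) h.1.symm⟩⟩
  have hsnd : (e.2.filter fun j => e.2.max' hτ < j).card = 0 := by
    simp only [Finset.card_eq_zero, Finset.filter_eq_empty_iff, not_lt]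
    exact fun l hl => e.2.le_max' l hl
  have hsign : ((-1 : MvPolynomial (Fin n) k) ^ (e.2.card + e.1.card)) =
      -(-1) ^ (e.2.card + (e.1.card - 1)) := by
    rw [show e.2.card + e.1.card = e.2.card + (e.1.card - 1) + 1 by
      have := hσ.card_pos; omega, pow_succ]
    ring
  rw [partialCell, if_pos hb, if_neg (by omega), if_pos h3, dif_pos hσ, dif_pos hτ, sndFace,
    fstFace, hfst, hsnd, hsign, pow_zero, one_mul, sub_eq_add_neg, neg_smul, neg_neg, mul_smul]

theorem diffCell_eq_partialCell {e : Cell n}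
    (h : ¬(IsBasisCell G e ∧ 3 ≤ e.1.card + e.2.card)) : diffCell G k e = partialCell G k e := by
  unfold diffCell partialCell
  split_ifs <;> simp_all

variable {G k}

theorem cMono_add_single_eq_zero {cA cB e : Cell n} {β : Fin n →₀ ℕ}
    (hg : AdmissibleTerm G cA cB e β) {j : Fin n} (hjτ : ↑j ≤ e.2.max)
    (hσj : e.2.card = 1 → e.1.min < ↑j) : cMono G k e (β + Finsupp.single j 1) = 0 := by
  refine eq_zero_of_termsSatisfy_false ((termsSatisfy_cMono G k hg.snd_nonempty _).mono
    fun e' α' ⟨_, ht⟩ => ?_)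
  have hC1 : ∀ m, m ∉ C1set e.2 (β + Finsupp.single j 1) := fun m hm => by
    obtain rfl : m = j := Finset.mem_singleton.1 (Finsupp.support_single_subset
      (C1set_add_subset hg.encloses_support.1 hm))
    have := max_lt_of_forall_lt (Finset.mem_filter.1 hm).2
    order
  cases ht with
  | extend hm => exact hC1 _ hm.1
  | exchange _ hm _ => exact hC1 _ hm.1
  | @prepend m hc _ hm =>
    obtain rfl : m = j := Finset.mem_singleton.1 (Finsupp.support_single_subset
      (C2set_add_subset G (hg.encloses_support.2 hc) hm.1))
    have := lt_min_of_forall_lt (Finset.mem_filter.1 hm.1).2.1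
    have := hσj hc
    order

variable {d e : Cell n}

theorem Cmap_X_smul_bstar_eq_zero (hAM : AdjUpwardClosed G) (N : ℕ) (hd : IsBasisCell G d)
    {c : Cell n} (hc : IsBasisCell G c) (hτ : c.2.Nonempty)
    {j : Fin n} (hjτ : ↑j ≤ c.2.max) (hσj : c.1.min < ↑j) :
    Cmap G k ((X j : MvPolynomial (Fin n) k) • bstar G k N c d) = 0 :=
  Cmap_eq_zero G <|
    ((termsSatisfy_bstar hAM N hc hd fun h => by simp [h.1] at hτ).X_smul j).mono
      fun _ _ ⟨_, hα, hg⟩ => hα ▸ cMono_add_single_eq_zero hg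
      (hjτ.trans hg.encloses_left.1) fun hcard => (hg.encloses_left.2 hcard).trans_lt hσj

theorem Cmap_linearCombination_fstFace_eq_zero (hAM : AdjUpwardClosed G) (N : ℕ)
    (hd : IsBasisCell G d) (he : IsBasisCell G e) (hτ : e.2.Nonempty)
    {s i : Fin n} (hs : s ∈ e.1) (hi : i ∈ e.1) (hsi : s < i) :
    Cmap G k (Finsupp.linearCombination _ (fun c => bstar G k N c d) (fstFace G k e i)) = 0 := by
  rw [fstFace, map_smul, Cmap_neg_one_pow_mul_X_smul, linearCombination_sym]
  split_ifs with hc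
  · obtain ⟨u, hu⟩ := hτ
    rw [Cmap_X_smul_bstar_eq_zero hAM N hd hc ⟨u, hu⟩
      ((WithBot.coe_le_coe.2 (he.lt hi hu).le).trans (Finset.le_max hu))
      ((Finset.min_le (Finset.mem_erase.2 ⟨hsi.ne, hs⟩)).trans_lt (WithTop.coe_lt_coe.2 hsi)),
      smul_zero]
  · simp

theorem Cmap_linearCombination_sndFace_eq_zero (hAM : AdjUpwardClosed G) (N : ℕ)
    (hd : IsBasisCell G d) (he : IsBasisCell G e) (hσ : e.1.Nonempty)
    {i u : Fin n} (hi : i ∈ e.2) (hu : u ∈ e.2) (hiu : i < u) :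
    Cmap G k (Finsupp.linearCombination _ (fun c => bstar G k N c d) (sndFace G k e i)) = 0 := by
  rw [sndFace, map_smul, Cmap_neg_one_pow_mul_X_smul, linearCombination_sym]
  split_ifs with hc
  · obtain ⟨s, hs⟩ := hσ
    have hu' : u ∈ e.2.erase i := Finset.mem_erase.2 ⟨hiu.ne', hu⟩
    rw [Cmap_X_smul_bstar_eq_zero hAM N hd hc ⟨u, hu'⟩
      ((WithBot.coe_le_coe.2 hiu.le).trans (Finset.le_max hu'))
      ((Finset.min_le hs).trans_lt (WithTop.coe_lt_coe.2 (he.lt hs hi))), smul_zero]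
  · simp

theorem Cmap_linearCombination_diffCell_eq_partialCell (hAM : AdjUpwardClosed G) (N : ℕ)
    (hd : IsBasisCell G d) (he : IsBasisCell G e)
    (h3 : 3 ≤ e.1.card + e.2.card) :
    Cmap G k (Finsupp.linearCombination _ (fun c => bstar G k N c d) (diffCell G k e)) =
      Cmap G k (Finsupp.linearCombination _ (fun c => bstar G k N c d) (partialCell G k e)) := by
  obtain ⟨hσ, hτ⟩ := he.nonempty fun h => by simp [h] at h3
  rw [diffCell_of_three_le G k he h3, partialCell_of_three_le G k he h3 hσ hτ]
  simp only [map_add, map_sum]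
  have hfst : ∀ i ∈ e.1, i ≠ e.1.min' hσ → Cmap G k (Finsupp.linearCombination _
      (fun c => bstar G k N c d) (fstFace G k e i)) = 0 := fun i hi hne =>
    Cmap_linearCombination_fstFace_eq_zero hAM N hd he hτ (e.1.min'_mem hσ) hi
      (lt_of_le_of_ne (e.1.min'_le i hi) (Ne.symm hne))
  have hsnd : ∀ i ∈ e.2, i ≠ e.2.max' hτ → Cmap G k (Finsupp.linearCombination _
      (fun c => bstar G k N c d) (sndFace G k e i)) = 0 := fun i hi hne =>
    Cmap_linearCombination_sndFace_eq_zero hAM N hd he hσ hi (e.2.max'_mem hτ)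
      (lt_of_le_of_ne (e.2.le_max' i hi) hne)
  rw [Finset.sum_eq_single_of_mem _ (e.1.min'_mem hσ) hfst,
    Finset.sum_eq_single_of_mem _ (e.2.max'_mem hτ) hsnd, add_comm]

end Vanishing

theorem stmt10_general (n : ℕ) (a b : Fin n → ℝ)
    (hab : ∀ i, a i ≤ b i) (hmono : ∀ i j : Fin n, i < j → a i ≤ a j)
    (k : Type) [Field k]
    (q : ℕ) (e₁ e₂ : Cell n)
    (h2 : InB (cigraph n a b) q e₂) :
    Cmap (cigraph n a b) k (pstar (cigraph n a b) k (Dmap (cigraph n a b) k (Finsupp.single e₁ 1)) (Finsupp.single e₂ 1)) =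
      Cmap (cigraph n a b) k (pstar (cigraph n a b) k (Pmap (cigraph n a b) k (Finsupp.single e₁ 1)) (Finsupp.single e₂ 1)) := by
  rw [pstar, pstar, Dmap_single, Pmap_single, biext_single_right, biext_single_right]
  by_cases he : IsBasisCell (cigraph n a b) e₁ ∧ 3 ≤ e₁.1.card + e₁.2.card
  · exact Cmap_linearCombination_diffCell_eq_partialCell
      (cigraph_adjUpwardClosed a b hab hmono) _ h2.1 he.1 he.2
  · rw [diffCell_eq_partialCell _ _ he]

theorem stmt10 (n : ℕ) (hn : 1 ≤ n) (a b : Fin n → ℝ)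
    (hab : ∀ i, a i ≤ b i) (hmono : ∀ i j : Fin n, i < j → a i ≤ a j)
    (k : Type) [Field k]
    (p q : ℕ) (hp : 1 ≤ p) (hq : 1 ≤ q) (e₁ e₂ : Cell n)
    (h1 : InB (cigraph n a b) p e₁) (h2 : InB (cigraph n a b) q e₂) :
    Cmap (cigraph n a b) k (pstar (cigraph n a b) k (Dmap (cigraph n a b) k (Finsupp.single e₁ 1)) (Finsupp.single e₂ 1)) =
      Cmap (cigraph n a b) k (pstar (cigraph n a b) k (Pmap (cigraph n a b) k (Finsupp.single e₁ 1)) (Finsupp.single e₂ 1)) :=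
  stmt10_general n a b hab hmono k q e₁ e₂ h2

end EdgeRes
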